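/- Let f be in B(X,P). If |f(X_i)| <= 2 for every i in I, then the D-class and the J-class of f in B(X,P) coincide: for every g in B(X,P), f J g if and only if f D g. -/

import Mathlib

open Cardinal

/-- `P : I → Set X` is a partition of `X`: blocks are nonempty, pairwise disjoint,
and cover `X`. -/
def IsPartition {X I : Type*} (P : I → Set X) : Prop :=
  (∀ i, (P i).Nonempty) ∧ Pairwise (Function.onFun Disjoint P) ∧ ∀ x, ∃ i, x ∈ P i

/-- `f` belongs to `B(X,P)` with character `χ`: `f` maps each block `P i` into the
block `P (χ i)`, and `χ` is a bijection of the index set. -/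
def MemB {X I : Type*} (P : I → Set X) (f : X → X) (χ : I → I) : Prop :=
  (∀ i, Set.MapsTo f (P i) (P (χ i))) ∧ Function.Bijective χ

/-- Green's `L` relation on `B(X,P)` (left-to-right composition: `f = hg` means
`f x = g (h x)`). -/
def GreenL {X I : Type*} (P : I → Set X) (f g : X → X) : Prop :=
  ∃ h χh h' χh', MemB P h χh ∧ MemB P h' χh' ∧
    (∀ x, f x = g (h x)) ∧ (∀ x, g x = f (h' x))

/-- Green's `R` relation on `B(X,P)` (`f = gh` means `f x = h (g x)`). -/
def GreenR {X I : Type*} (P : I → Set X) (f g : X → X) : Prop :=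
  ∃ h χh h' χh', MemB P h χh ∧ MemB P h' χh' ∧
    (∀ x, f x = h (g x)) ∧ (∀ x, g x = h' (f x))

/-- Green's `D` relation on `B(X,P)`. -/
def GreenD {X I : Type*} (P : I → Set X) (f g : X → X) : Prop :=
  ∃ k χk, MemB P k χk ∧ GreenL P f k ∧ GreenR P k g

/-- Green's `J` relation on `B(X,P)` (`f = h₁ g h₂` means `f x = h₂ (g (h₁ x))`). -/
def GreenJ {X I : Type*} (P : I → Set X) (f g : X → X) : Prop :=
  (∃ h1 χ1 h2 χ2, MemB P h1 χ1 ∧ MemB P h2 χ2 ∧ ∀ x, f x = h2 (g (h1 x))) ∧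
  (∃ h3 χ3 h4 χ4, MemB P h3 χ3 ∧ MemB P h4 χ4 ∧ ∀ x, g x = h4 (f (h3 x)))

/-!
The inclusion `D ⊆ J` holds in every semigroup. Conversely, two-sided factorizations
`f = h₁ g h₂` and `g = h₃ f h₄` force `|f(X_i)| ≤ |g(X_{χ₁ i})|` and `|g(X_j)| ≤ |f(X_{χ₃ j})|`.
When all these block images have one or two elements, Schröder–Bernstein, applied separately
to the blocks with one-point images and to the others, gives a permutation `τ` of `I` with
`|g(X_j)| = |f(X_{τ j})|`. Following `g` on `X_j` by a bijection `g(X_j) ≃ f(X_{τ j})`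
gives `k` with the kernel of `g` and, up to `τ`, the block images of `f`; hence `f L k R g`.
-/

namespace IsPartition

variable {X I : Type*} {P : I → Set X}

theorem eq_of_mem (hP : IsPartition P) {x : X} {i j : I} (hi : x ∈ P i) (hj : x ∈ P j) :
    i = j :=
  by_contra fun h => Set.disjoint_left.mp (hP.2.1 h) hi hj

noncomputable def index (hP : IsPartition P) (x : X) : I := (hP.2.2 x).choose

theorem mem_index (hP : IsPartition P) (x : X) : x ∈ P (hP.index x) := (hP.2.2 x).choose_spec

theorem index_eq (hP : IsPartition P) {x : X} {i : I} (hx : x ∈ P i) : hP.index x = i :=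
  hP.eq_of_mem (hP.mem_index x) hx

end IsPartition

namespace MemB

variable {X I : Type*} {P : I → Set X} {f : X → X} {χ : I → I}

theorem index_apply (hP : IsPartition P) (hf : MemB P f χ) (x : X) :
    hP.index (f x) = χ (hP.index x) :=
  hP.index_eq (hf.1 _ (hP.mem_index x))

theorem index_eq_of_apply_eq (hP : IsPartition P) (hf : MemB P f χ) {x y : X} (h : f x = f y) :
    hP.index x = hP.index y :=
  hf.2.1 (by rw [← hf.index_apply hP, h, hf.index_apply hP])

end MemB

theorem Equiv.Perm.exists_iff_apply_of_imp {I : Type*} {p q : I → Prop} (α β : Equiv.Perm I)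
    (hα : ∀ i, p (α i) → q i) (hβ : ∀ i, q (β i) → p i) :
    ∃ τ : Equiv.Perm I, ∀ j, p j ↔ q (τ j) := by
  classical
  obtain ⟨e⟩ := Function.Embedding.antisymm
    (α.symm.toEmbedding.subtypeMap fun j hj => hα _ (by simpa using hj) :
      {j // p j} ↪ {i // q i})
    (β.symm.toEmbedding.subtypeMap fun i hi => hβ _ (by simpa using hi))
  obtain ⟨e'⟩ := Function.Embedding.antisymm
    (β.toEmbedding.subtypeMap fun j hj hq => hj (hβ j hq) : {j // ¬p j} ↪ {i // ¬q i})
    (α.toEmbedding.subtypeMap fun i hi hp => hi (hα i hp))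
  refine ⟨Equiv.subtypeCongr e e', fun j => ?_⟩
  by_cases hj : p j
  · simp [Equiv.subtypeCongr, hj, (e ⟨j, hj⟩).2]
  · simp [Equiv.subtypeCongr, hj, (e' ⟨j, hj⟩).2]

theorem Set.mk_eq_two_of_not_subsingleton {X : Type*} {S : Set X} (hS2 : #S ≤ 2)
    (hS : ¬S.Subsingleton) : #S = 2 := by
  obtain ⟨x, hx, y, hy, hxy⟩ := Set.not_subsingleton_iff.mp hS
  exact le_antisymm hS2 (two_le_iff.mpr ⟨⟨x, hx⟩, ⟨y, hy⟩, by simpa using hxy⟩)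

theorem Set.nonempty_equiv_of_mk_le_two {X : Type*} {S T : Set X} (hS : S.Nonempty)
    (hT : T.Nonempty) (hS2 : #S ≤ 2) (hT2 : #T ≤ 2) (h : S.Subsingleton ↔ T.Subsingleton) :
    Nonempty (S ≃ T) := by
  rw [← Cardinal.eq]
  by_cases hs : S.Subsingleton
  · have := hs.coe_sort
    have := (h.mp hs).coe_sort
    have := hS.to_subtype
    have := hT.to_subtype
    rw [mk_eq_one, mk_eq_one]
  · rw [mk_eq_two_of_not_subsingleton hS2 hs, mk_eq_two_of_not_subsingleton hT2 (h.not.mp hs)]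

theorem Set.image_subset_image_image_of_eq {X : Type*} {f g u h : X → X} {S T : Set X}
    (hh : Set.MapsTo h S T) (heq : ∀ x, f x = u (g (h x))) : f '' S ⊆ u '' (g '' T) := by
  rintro _ ⟨x, hx, rfl⟩
  exact ⟨g (h x), ⟨h x, hh hx, rfl⟩, (heq x).symm⟩

section Green

variable {X I : Type*} {P : I → Set X}

theorem exists_memB_eq_comp_of_image_subset (hP : IsPartition P) {f k : X → X}
    (σ : Equiv.Perm I) (hsub : ∀ i, f '' P i ⊆ k '' P (σ i)) :
    ∃ h, MemB P h σ ∧ ∀ x, f x = k (h x) := by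
  choose h hmem heq using fun x => hsub _ ⟨x, hP.mem_index x, rfl⟩
  exact ⟨h, ⟨fun i x hx => hP.index_eq hx ▸ hmem x, σ.bijective⟩, fun x => (heq x).symm⟩

theorem greenL_of_image_eq (hP : IsPartition P) {f k : X → X} (τ : Equiv.Perm I)
    (himage : ∀ j, k '' P j = f '' P (τ j)) : GreenL P f k := by
  obtain ⟨h, hh, hfk⟩ :=
    exists_memB_eq_comp_of_image_subset hP (f := f) (k := k) τ.symm fun i => by
      rw [himage, τ.apply_symm_apply]
  obtain ⟨h', hh', hkf⟩ :=
    exists_memB_eq_comp_of_image_subset hP τ fun j => (himage j).subset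
  exact ⟨h, _, h', _, hh, hh', hfk, hkf⟩

theorem exists_memB_eq_comp_of_factorsThrough (hP : IsPartition P) {k g : X → X}
    {χk χg : I → I} (hk : MemB P k χk) (hg : MemB P g χg) (hkg : k.FactorsThrough g) :
    ∃ h χh, MemB P h χh ∧ ∀ x, k x = h (g x) := by
  let e := Equiv.ofBijective χg hg.2
  refine ⟨Function.extend g k fun y => (hP.1 (χk (e.symm (hP.index y)))).some, χk ∘ e.symm,
    ⟨fun j y hy => ?_, hk.2.comp e.symm.bijective⟩, fun x => (hkg.extend_apply _ x).symm⟩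
  by_cases hrange : ∃ x, g x = y
  · obtain ⟨x, rfl⟩ := hrange
    rw [hkg.extend_apply, ← hP.index_eq hy, hg.index_apply hP, Function.comp_apply,
      Equiv.ofBijective_symm_apply_apply]
    exact hk.1 _ (hP.mem_index x)
  · rw [Function.extend_apply' _ _ _ hrange, hP.index_eq hy]
    exact (hP.1 _).some_mem

theorem greenR_of_apply_eq_iff (hP : IsPartition P) {k g : X → X} {χk χg : I → I}
    (hk : MemB P k χk) (hg : MemB P g χg) (hker : ∀ x y, k x = k y ↔ g x = g y) :
    GreenR P k g := by
  obtain ⟨h, χh, hh, hkg⟩ :=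
    exists_memB_eq_comp_of_factorsThrough hP hk hg fun x y => (hker x y).2
  obtain ⟨h', χh', hh', hgk⟩ :=
    exists_memB_eq_comp_of_factorsThrough hP hg hk fun x y => (hker x y).1
  exact ⟨h, χh, h', χh', hh, hh', hkg, hgk⟩

theorem GreenD.greenJ {f g : X → X} (hD : GreenD P f g) : GreenJ P f g := by
  obtain ⟨k, -, -, ⟨h, χh, h', χh', hh, hh', hfk, hkf⟩,
    ⟨m, χm, m', χm', hm, hm', hkg, hgk⟩⟩ := hD
  exact ⟨⟨h, χh, m, χm, hh, hm, fun x => (hfk x).trans (hkg (h x))⟩,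
    ⟨h', χh', m', χm', hh', hm', fun x => (hgk x).trans (congrArg m' (hkf x))⟩⟩

theorem exists_memB_image_eq_apply_eq_iff (hP : IsPartition P) {f g : X → X} {χf χg : I → I}
    (hf : MemB P f χf) (hg : MemB P g χg) (τ : Equiv.Perm I)
    (φ : ∀ j, g '' P j ≃ f '' P (τ j)) :
    ∃ k, MemB P k (χf ∘ τ) ∧ (∀ j, k '' P j = f '' P (τ j)) ∧
      ∀ x y, k x = k y ↔ g x = g y := by
  let k : X → X := fun x => φ (hP.index x) ⟨g x, x, hP.mem_index x, rfl⟩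
  have hk : ∀ {j x} (hx : x ∈ P j), k x = φ j ⟨g x, x, hx, rfl⟩ := by
    intro j x hx
    rcases hP.index_eq hx with rfl
    rfl
  have hkB : MemB P k (χf ∘ τ) := by
    refine ⟨fun j x hx => ?_, hf.2.comp τ.bijective⟩
    obtain ⟨y, hy, hfy⟩ := (φ j ⟨g x, x, hx, rfl⟩).2
    rw [hk hx, ← hfy]
    exact hf.1 _ hy
  refine ⟨k, hkB, fun j => Set.ext fun z => ⟨?_, fun hz => ?_⟩, fun x y => ⟨fun hxy => ?_, ?_⟩⟩
  · rintro ⟨x, hx, rfl⟩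
    rw [hk hx]
    exact (φ j _).2
  · obtain ⟨⟨_, x, hx, rfl⟩, hφ⟩ := (φ j).surjective ⟨z, hz⟩
    exact ⟨x, hx, by rw [hk hx, hφ]⟩
  · have hy : y ∈ P (hP.index x) := hkB.index_eq_of_apply_eq hP hxy ▸ hP.mem_index y
    rw [hk (hP.mem_index x), hk hy] at hxy
    exact congrArg Subtype.val ((φ _).injective (Subtype.ext hxy))
  · intro hxy
    have hy : y ∈ P (hP.index x) := hg.index_eq_of_apply_eq hP hxy ▸ hP.mem_index y
    rw [hk (hP.mem_index x), hk hy]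
    exact congrArg (fun z => (φ _ z : X)) (Subtype.ext hxy)

theorem GreenJ.greenD_of_mk_image_le_two (hP : IsPartition P) {f g : X → X} {χf χg : I → I}
    (hf : MemB P f χf) (hg : MemB P g χg) (hle : ∀ i, #(f '' P i) ≤ 2) (hJ : GreenJ P f g) :
    GreenD P f g := by
  obtain ⟨⟨h₁, χ₁, h₂, -, hh₁, -, hfg⟩, h₃, χ₃, h₄, -, hh₃, -, hgf⟩ := hJ
  have hfg_sub : ∀ i, f '' P i ⊆ h₂ '' (g '' P (χ₁ i)) :=
    fun i => Set.image_subset_image_image_of_eq (hh₁.1 i) hfg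
  have hgf_sub : ∀ j, g '' P j ⊆ h₄ '' (f '' P (χ₃ j)) :=
    fun j => Set.image_subset_image_image_of_eq (hh₃.1 j) hgf
  have hle' : ∀ j, #(g '' P j) ≤ 2 :=
    fun j => (mk_le_mk_of_subset (hgf_sub j)).trans (mk_image_le.trans (hle _))
  obtain ⟨τ, hτ⟩ := Equiv.Perm.exists_iff_apply_of_imp
    (p := fun j => (g '' P j).Subsingleton) (q := fun i => (f '' P i).Subsingleton)
    (Equiv.ofBijective χ₁ hh₁.2) (Equiv.ofBijective χ₃ hh₃.2)
    (fun i hs => (hs.image h₂).anti (hfg_sub i)) (fun j hs => (hs.image h₄).anti (hgf_sub j))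
  have φ : ∀ j, g '' P j ≃ f '' P (τ j) := fun j => Classical.choice <|
    Set.nonempty_equiv_of_mk_le_two ((hP.1 j).image g) ((hP.1 _).image f) (hle' j) (hle _) (hτ j)
  obtain ⟨k, hk, himage, hker⟩ := exists_memB_image_eq_apply_eq_iff hP hf hg τ φ
  exact ⟨k, _, hk, greenL_of_image_eq hP τ himage, greenR_of_apply_eq_iff hP hk hg hker⟩

end Green

theorem D_eq_J_class_of_le_two_general {X I : Type*} (P : I → Set X)
    (hP : IsPartition P) (f : X → X) (χf : I → I) (hf : MemB P f χf)
    (hle : ∀ i, Cardinal.mk ↥(f '' (P i)) ≤ 2) :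
    ∀ g χg, MemB P g χg → (GreenJ P f g ↔ GreenD P f g) :=
  fun _ _ hg => ⟨GreenJ.greenD_of_mk_image_le_two hP hf hg hle, GreenD.greenJ⟩

/-- If `|f '' (P i)| ≤ 2` for all `i`, then the `D`-class and the `J`-class of `f`
in `B(X,P)` coincide. -/
theorem D_eq_J_class_of_le_two {X I : Type*} [Nonempty X] (P : I → Set X)
    (hP : IsPartition P) (f : X → X) (χf : I → I) (hf : MemB P f χf)
    (hle : ∀ i, Cardinal.mk ↥(f '' (P i)) ≤ 2) :
    ∀ g χg, MemB P g χg → (GreenJ P f g ↔ GreenD P f g) :=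
  D_eq_J_class_of_le_two_general P hP f χf hf hle
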